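/- arXiv:2512.20134 — 2 statements merged into one kernel-verified Lean document; each statement's English description precedes it below -/
import Mathlib

section
/- Let m ≥ 2 and n ≥ 1 be integers and let a, b, c_1, ..., c_n be integers satisfying: (i) (2-m)a + 2b - Σc_i = 1; (ii) -m·a^2 + 2ab - Σc_i^2 = -1; (iii) a ≥ 0; (iv) d := b - m·a ≥ 0; and (v) (m+1)a + d - Σc_i ≥ 0. Then (a,d) is one of (0,0), (0,1), (1,0). Moreover: if (a,d)=(0,0) then exactly one c_i equals -1 and the rest are 0; if (a,d)=(0,1) then exactly one c_i equals 1 and the rest are 0; if (a,d)=(1,0) then every c_i ∈ {0,1} and exactly m+1 of them equal 1 (so n ≥ m+1). -/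
lemma aux_sq_sum_one {n : ℕ} (c : Fin n → ℤ) (h : ∑ i, (c i) ^ 2 = 1) :
    ∃ i, (c i) ^ 2 = 1 ∧ ∀ j, j ≠ i → c j = 0 := by
  have hpos : ∃ i, c i ≠ 0 := by
    by_contra h'
    push_neg at h'
    simp [h'] at h
  obtain ⟨i, hi⟩ := hpos
  have hi1 : 1 ≤ |c i| := Int.one_le_abs (by simpa using hi)
  have hi2 : 1 ≤ (c i) ^ 2 := by nlinarith [sq_abs (c i)]
  have hsplit : (c i) ^ 2 + ∑ j ∈ Finset.univ.erase i, (c j) ^ 2 = 1 :=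
    (Finset.add_sum_erase Finset.univ (fun j => (c j) ^ 2) (Finset.mem_univ i)).trans h
  have hnn : ∀ j ∈ Finset.univ.erase i, 0 ≤ (c j) ^ 2 := fun j _ => sq_nonneg _
  have hrest : ∑ j ∈ Finset.univ.erase i, (c j) ^ 2 = 0 := by
    have := Finset.sum_nonneg hnn
    linarith
  refine ⟨i, by linarith, fun j hj => ?_⟩
  have hj0 : (c j) ^ 2 = 0 :=
    (Finset.sum_eq_zero_iff_of_nonneg hnn).mp hrest j (Finset.mem_erase.mpr ⟨hj, Finset.mem_univ j⟩)
  exact pow_eq_zero_iff (by norm_num) |>.mp hj0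

lemma aux_single {n : ℕ} (c : Fin n → ℤ) (s : ℤ) (hT : ∑ i, (c i) ^ 2 = 1)
    (hS : ∑ i, c i = s) (hs : s ^ 2 = 1) :
    ∃ i, c i = s ∧ ∀ j, j ≠ i → c j = 0 := by
  obtain ⟨i, hi, hrest⟩ := aux_sq_sum_one c hT
  refine ⟨i, ?_, hrest⟩
  have : ∑ j, c j = c i := Finset.sum_eq_single i (fun j _ hj => hrest j hj) (by simp)
  omega

/-- Arithmetic classification of (-1)-curve classes aQ + bF - Σ c_iE_i on the blow-up of
the Hirzebruch surface F_m at n points. -/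
theorem stmt_7 (m n : ℕ) (hm : 2 ≤ m) (hn : 1 ≤ n) (a b : ℤ) (c : Fin n → ℤ)
    (h1 : (2 - (m : ℤ)) * a + 2 * b - ∑ i, c i = 1)
    (h2 : -(m : ℤ) * a ^ 2 + 2 * a * b - ∑ i, (c i) ^ 2 = -1)
    (h3 : 0 ≤ a)
    (h4 : 0 ≤ b - (m : ℤ) * a)
    (h5 : 0 ≤ ((m : ℤ) + 1) * a + (b - (m : ℤ) * a) - ∑ i, c i) :
    (a = 0 ∧ b - (m : ℤ) * a = 0 ∧ ∃ i, c i = -1 ∧ ∀ j, j ≠ i → c j = 0) ∨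
    (a = 0 ∧ b - (m : ℤ) * a = 1 ∧ ∃ i, c i = 1 ∧ ∀ j, j ≠ i → c j = 0) ∨
    (a = 1 ∧ b - (m : ℤ) * a = 0 ∧ (∀ i, c i = 0 ∨ c i = 1) ∧
      (Finset.univ.filter fun i => c i = 1).card = m + 1 ∧ m + 1 ≤ n) := by
  set S := ∑ i, c i with hSdef
  set T := ∑ i, (c i) ^ 2 with hTdef
  -- a + d ≤ 1 where d = b - m a
  have hb : a + (b - (m : ℤ) * a) ≤ 1 := by linarith
  have hcases : (a = 0 ∧ b = 0) ∨ (a = 0 ∧ b = 1) ∨ (a = 1 ∧ b = m) := by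
    rcases (by omega : a = 0 ∧ b - (m : ℤ) * a = 0 ∨ a = 0 ∧ b - (m : ℤ) * a = 1 ∨
        a = 1 ∧ b - (m : ℤ) * a = 0) with h | h | h
    · exact Or.inl ⟨h.1, by have := h.2; have := h.1; nlinarith⟩
    · exact Or.inr (Or.inl ⟨h.1, by have := h.2; have := h.1; nlinarith⟩)
    · exact Or.inr (Or.inr ⟨h.1, by have := h.2; have := h.1; nlinarith⟩)
  rcases hcases with ⟨ha, hbv⟩ | ⟨ha, hbv⟩ | ⟨ha, hbv⟩
  · left
    have hT1 : T = 1 := by rw [ha, hbv] at h2; linarith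
    have hS1 : S = -1 := by rw [ha, hbv] at h1; linarith
    exact ⟨ha, by rw [ha, hbv]; ring, aux_single c (-1) hT1 hS1 (by norm_num)⟩
  · right; left
    have hT1 : T = 1 := by rw [ha, hbv] at h2; linarith
    have hS1 : S = 1 := by rw [ha, hbv] at h1; linarith
    exact ⟨ha, by rw [ha, hbv]; ring, aux_single c 1 hT1 hS1 (by norm_num)⟩
  · right; right
    have hT1 : T = (m : ℤ) + 1 := by rw [ha, hbv] at h2; nlinarith
    have hS1 : S = (m : ℤ) + 1 := by rw [ha, hbv] at h1; linarith
    have hdiff : ∑ i, ((c i) ^ 2 - c i) = 0 := by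
      rw [Finset.sum_sub_distrib]; rw [← hTdef, ← hSdef]; omega
    have hnn : ∀ i ∈ Finset.univ, 0 ≤ (c i) ^ 2 - c i := by
      intro i _
      rcases le_or_gt (c i) 0 with h | h
      · nlinarith
      · nlinarith
    have heach : ∀ i, (c i) ^ 2 = c i := by
      intro i
      have := (Finset.sum_eq_zero_iff_of_nonneg hnn).mp hdiff i (Finset.mem_univ i)
      omega
    have h01 : ∀ i, c i = 0 ∨ c i = 1 := by
      intro i
      have h0 : c i * (c i - 1) = 0 := by have := heach i; nlinarith
      rcases mul_eq_zero.mp h0 with h | h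
      · exact Or.inl h
      · exact Or.inr (by omega)
    have hsum_ite : S = ∑ i, (if c i = 1 then (1 : ℤ) else 0) := by
      apply Finset.sum_congr rfl
      intro i _
      rcases h01 i with h | h <;> simp [h]
    have hcard : ((Finset.univ.filter fun i => c i = 1).card : ℤ) = (m : ℤ) + 1 := by
      rw [← Finset.sum_boole, ← hsum_ite, hS1]
    have hcardn : (Finset.univ.filter fun i => c i = 1).card = m + 1 := by
      exact_mod_cast hcard
    refine ⟨ha, by rw [ha, hbv]; ring, h01, hcardn, ?_⟩
    have := Finset.card_filter_le Finset.univ (fun i => c i = 1)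
    simp only [Finset.card_univ, Fintype.card_fin] at this
    omega
end

section
/- Let m ≥ 2, and let d, μ_1, ..., μ_{m+5} be non-negative integers satisfying: (i) 2d = μ_1 + ... + μ_{m+4}; (ii) d^2 - (μ_1^2 + ... + μ_{m+4}^2) - μ_{m+5}^2 = -1; (iii) 3d - (μ_1 + ... + μ_{m+4}) - μ_{m+5} = 1. Then μ_{m+5} = d - 1 (in particular d ≥ 1), every μ_j with j ≤ m+4 lies in {0,1}, exactly 2d of them equal 1, and 2d ≤ m+4, i.e. d ≤ ⌊m/2⌋ + 2. -/
/-- Classification of (-1)-curve classes de₀ - Σ μ_je_j disjoint from the conic class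
Q = 2e₀ - (e₁ + ⋯ + e_{m+4}) on the blow-up of P² at m+5 points. -/
theorem stmt_8 (m : ℕ) (hm : 2 ≤ m) (d : ℤ) (hd : 0 ≤ d)
    (μ : Fin (m + 4) → ℤ) (ν : ℤ) (hμ : ∀ j, 0 ≤ μ j) (hν : 0 ≤ ν)
    (h1 : 2 * d = ∑ j, μ j)
    (h2 : d ^ 2 - (∑ j, (μ j) ^ 2) - ν ^ 2 = -1)
    (h3 : 3 * d - (∑ j, μ j) - ν = 1) :
    ν = d - 1 ∧ 1 ≤ d ∧ (∀ j, μ j = 0 ∨ μ j = 1) ∧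
    ((Finset.univ.filter fun j => μ j = 1).card : ℤ) = 2 * d ∧
    2 * d ≤ (m : ℤ) + 4 := by
  have hνd : ν = d - 1 := by linarith [h1, h3]
  have hd1 : 1 ≤ d := by linarith
  have hsq : (∑ j, (μ j) ^ 2) = ∑ j, μ j := by
    rw [← h1]; nlinarith [hνd, h2]
  have hkey : ∑ j, ((μ j) ^ 2 - μ j) = 0 := by
    rw [Finset.sum_sub_distrib, hsq]; ring
  have hnn : ∀ j ∈ Finset.univ, 0 ≤ (μ j) ^ 2 - μ j := by
    intro j _
    nlinarith [hμ j, sq_nonneg (μ j - 1)]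
  have hzero : ∀ j ∈ Finset.univ, (μ j) ^ 2 - μ j = 0 :=
    (Finset.sum_eq_zero_iff_of_nonneg hnn).mp hkey
  have h01 : ∀ j, μ j = 0 ∨ μ j = 1 := by
    intro j
    have := hzero j (Finset.mem_univ j)
    have : μ j * (μ j - 1) = 0 := by ring_nf; linarith [this]
    rcases mul_eq_zero.mp this with h | h
    · left; exact h
    · right; linarith
  have hcard : ((Finset.univ.filter fun j => μ j = 1).card : ℤ) = 2 * d := by
    rw [h1]
    have : ∀ j ∈ Finset.univ, μ j = if μ j = 1 then 1 else 0 := by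
      intro j _; rcases h01 j with h | h <;> simp [h]
    rw [Finset.sum_congr rfl this, Finset.sum_boole]
  refine ⟨hνd, hd1, h01, hcard, ?_⟩
  have hle : ∑ j, μ j ≤ ∑ _j : Fin (m + 4), (1 : ℤ) :=
    Finset.sum_le_sum (fun j _ => by rcases h01 j with h | h <;> simp [h])
  simp at hle
  push_cast at hle
  linarith
end
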